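/- Let a, b be real numbers with b > 0 and a + b > 0, and let p ≥ 1. Then (a + b)^p ≥ |a|^p + b^p − p|a|^{p−1}b − p|a|b^{p−1}. -/

import Mathlib

/-!
For `a ≥ 0` the inequality follows from superadditivity of `t ↦ t ^ p` on `[0, ∞)`, the two
subtracted terms being nonnegative. For `a < 0` put `c = -a ∈ (0, b)`. Convexity of `t ↦ t ^ p`
at `b` gives `(b - c) ^ p ≥ b ^ p - p b ^ (p - 1) c`, and `c ^ p = c ^ (p - 1) c ≤ p c ^ (p - 1) b`
absorbs the remaining term `c ^ p` into `p c ^ (p - 1) b`.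
-/

namespace Real

variable {p : ℝ}

lemma rpow_add_mul_rpow_sub_one_mul_sub_le_rpow {x y : ℝ} (hx : 0 ≤ x) (hy : 0 < y)
    (hp : 1 ≤ p) : y ^ p + p * y ^ (p - 1) * (x - y) ≤ x ^ p := by
  have hbernoulli : 1 + p * (x / y - 1) ≤ (x / y) ^ p := by
    have hs : -1 ≤ x / y - 1 := by linarith [div_nonneg hx hy.le]
    simpa using one_add_mul_self_le_rpow_one_add hs hp
  have hyp : 0 < y ^ p := rpow_pos_of_pos hy p
  calc y ^ p + p * y ^ (p - 1) * (x - y)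
      = (1 + p * (x / y - 1)) * y ^ p := by
        rw [rpow_sub_one hy.ne']
        field_simp
    _ ≤ (x / y) ^ p * y ^ p := mul_le_mul_of_nonneg_right hbernoulli hyp.le
    _ = x ^ p := by rw [div_rpow hx hy.le, div_mul_cancel₀ _ hyp.ne']

lemma rpow_le_mul_rpow_sub_one_mul {c b : ℝ} (hc : 0 < c) (hcb : c ≤ b) (hp : 1 ≤ p) :
    c ^ p ≤ p * c ^ (p - 1) * b := by
  have hcp : 0 ≤ c ^ (p - 1) := rpow_nonneg hc.le _
  calc c ^ p = c ^ (p - 1) * c := by simpa using rpow_add_one hc.ne' (p - 1)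
    _ ≤ c ^ (p - 1) * b := mul_le_mul_of_nonneg_left hcb hcp
    _ ≤ p * c ^ (p - 1) * b := by
      rw [mul_assoc]
      exact le_mul_of_one_le_left (mul_nonneg hcp (hc.le.trans hcb)) hp

end Real

/-- For real numbers `a`, `b` with `b > 0`, `a + b > 0` and a real
exponent `p ≥ 1`, one has `(a + b)^p ≥ |a|^p + b^p − p|a|^{p−1}b − p|a|b^{p−1}`,
where all powers are real (`rpow`) powers. -/
theorem statement16 (a b p : ℝ) (hb : 0 < b) (hab : 0 < a + b) (hp : 1 ≤ p) :
    (a + b) ^ p ≥ |a| ^ p + b ^ p - p * |a| ^ (p - 1) * b - p * |a| * b ^ (p - 1) := by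
  have hp0 : 0 ≤ p := zero_le_one.trans hp
  rcases le_or_gt 0 a with ha | ha
  · rw [abs_of_nonneg ha]
    have hsuper := Real.add_rpow_le_rpow_add ha hb.le hp
    have h₁ : 0 ≤ p * a ^ (p - 1) * b := by positivity
    have h₂ : 0 ≤ p * a * b ^ (p - 1) := by positivity
    linarith
  · obtain ⟨c, rfl⟩ : ∃ c, a = -c := ⟨-a, (neg_neg a).symm⟩
    have hc : 0 < c := neg_lt_zero.mp ha
    rw [abs_neg, abs_of_pos hc, neg_add_eq_sub]
    have htangent :=
      Real.rpow_add_mul_rpow_sub_one_mul_sub_le_rpow (x := b - c) (by linarith) hb hp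
    have habsorb := Real.rpow_le_mul_rpow_sub_one_mul (b := b) hc (by linarith) hp
    linarith
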